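/- arXiv:1605.02336 — 4 statements merged into one kernel-verified Lean document; each statement's English description precedes it below -/
import Mathlib

section
/- Let n ∈ ℝ and k_n = n − 1. On the phase space Ω = {(r, φ, p_r, p_φ) ∈ ℝ⁴ : r > 0} with canonical Poisson bracket, the three Noether momenta P₁ = rⁿ(p_r cos(k_n φ) + (p_φ/r) sin(k_n φ)), P₂ = rⁿ(p_r sin(k_n φ) − (p_φ/r) cos(k_n φ)) and p_φ all Poisson-commute with the kinetic Hamiltonian T_n = (1/2) r^{2n}(p_r² + p_φ²/r²): {P₁, T_n} = 0, {P₂, T_n} = 0 and {p_φ, T_n} = 0 at every point of Ω. -/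
open Real

/-- Canonical Poisson bracket on the phase space Ω ⊆ ℝ⁴ with coordinates (r, φ, p_r, p_φ):
{F,G} = F_r G_{p_r} − F_{p_r} G_r + F_φ G_{p_φ} − F_{p_φ} G_φ. -/
noncomputable def pb (F G : ℝ → ℝ → ℝ → ℝ → ℝ) (r φ pr pφ : ℝ) : ℝ :=
  (deriv (fun x => F x φ pr pφ) r) * (deriv (fun x => G r φ x pφ) pr)
    - (deriv (fun x => F r φ x pφ) pr) * (deriv (fun x => G x φ pr pφ) r)
    + (deriv (fun x => F r x pr pφ) φ) * (deriv (fun x => G r φ pr x) pφ)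
    - (deriv (fun x => F r φ pr x) pφ) * (deriv (fun x => G r x pr pφ) φ)

/-- Kinetic Hamiltonian T_n = (1/2) r^(2n) (p_r² + p_φ²/r²) of the
position dependent mass m_n = 1/r^(2n). -/
noncomputable def Tkin (n : ℝ) (r φ pr pφ : ℝ) : ℝ :=
  (1/2) * r ^ (2*n) * (pr^2 + pφ^2 / r^2)

/-- Noether momentum P₁ = rⁿ (p_r cos(k_n φ) + (p_φ/r) sin(k_n φ)), k_n = n − 1. -/
noncomputable def P1 (n : ℝ) (r φ pr pφ : ℝ) : ℝ :=
  r ^ n * (pr * cos ((n-1)*φ) + (pφ / r) * sin ((n-1)*φ))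

/-- Noether momentum P₂ = rⁿ (p_r sin(k_n φ) − (p_φ/r) cos(k_n φ)), k_n = n − 1. -/
noncomputable def P2 (n : ℝ) (r φ pr pφ : ℝ) : ℝ :=
  r ^ n * (pr * sin ((n-1)*φ) - (pφ / r) * cos ((n-1)*φ))

/-!
On `Ω` the kinetic Hamiltonian is `T_n = (P₁² + P₂²) / 2`, so by the Leibniz rule
`{P₁, T_n} = P₂ {P₁, P₂}` and `{P₂, T_n} = -P₁ {P₁, P₂}`. The momenta `P₁, -P₂` are the
Cartesian momenta of the flat coordinate `w = z^(1-n) / (1-n)`, `z = r e^{iφ}`, and indeed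
`{P₁, P₂} = 0` by direct computation. Finally `∂_φ P₁ = -k_n P₂` and `∂_φ P₂ = k_n P₁`:
`p_φ` rotates `(P₁, P₂)` and so leaves `P₁² + P₂²` invariant.
-/

open Filter Topology

theorem HasDerivAt.half_sq_add_sq {f g : ℝ → ℝ} {f' g' x : ℝ} (hf : HasDerivAt f f' x)
    (hg : HasDerivAt g g' x) :
    HasDerivAt (fun y => (f y ^ 2 + g y ^ 2) / 2) (f x * f' + g x * g') x :=
  (((hf.pow 2).add (hg.pow 2)).div_const 2).congr_deriv (by push_cast; ring)

structure HasPartialsAt (F : ℝ → ℝ → ℝ → ℝ → ℝ) (Fr Fφ Fpr Fpφ r φ pr pφ : ℝ) : Prop where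
  hasDerivAt_r : HasDerivAt (fun x => F x φ pr pφ) Fr r
  hasDerivAt_φ : HasDerivAt (fun x => F r x pr pφ) Fφ φ
  hasDerivAt_pr : HasDerivAt (fun x => F r φ x pφ) Fpr pr
  hasDerivAt_pφ : HasDerivAt (fun x => F r φ pr x) Fpφ pφ

namespace HasPartialsAt

variable {F G : ℝ → ℝ → ℝ → ℝ → ℝ} {Fr Fφ Fpr Fpφ Gr Gφ Gpr Gpφ r φ pr pφ : ℝ}

theorem pb_eq (hF : HasPartialsAt F Fr Fφ Fpr Fpφ r φ pr pφ)
    (hG : HasPartialsAt G Gr Gφ Gpr Gpφ r φ pr pφ) :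
    pb F G r φ pr pφ = Fr * Gpr - Fpr * Gr + Fφ * Gpφ - Fpφ * Gφ := by
  rw [pb, hF.hasDerivAt_r.deriv, hF.hasDerivAt_φ.deriv, hF.hasDerivAt_pr.deriv,
    hF.hasDerivAt_pφ.deriv, hG.hasDerivAt_r.deriv, hG.hasDerivAt_φ.deriv,
    hG.hasDerivAt_pr.deriv, hG.hasDerivAt_pφ.deriv]

theorem congr_of_eventuallyEq (hF : HasPartialsAt F Fr Fφ Fpr Fpφ r φ pr pφ)
    (h : G =ᶠ[𝓝 r] F) : HasPartialsAt G Fr Fφ Fpr Fpφ r φ pr pφ := by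
  have hr : G r = F r := h.eq_of_nhds
  refine ⟨hF.hasDerivAt_r.congr_of_eventuallyEq (h.mono fun x hx => by simp only [hx]),
    ?_, ?_, ?_⟩ <;> simp only [hr]
  exacts [hF.hasDerivAt_φ, hF.hasDerivAt_pr, hF.hasDerivAt_pφ]

theorem half_sq_add_sq (hF : HasPartialsAt F Fr Fφ Fpr Fpφ r φ pr pφ)
    (hG : HasPartialsAt G Gr Gφ Gpr Gpφ r φ pr pφ) :
    HasPartialsAt (fun a b c d => (F a b c d ^ 2 + G a b c d ^ 2) / 2)
      (F r φ pr pφ * Fr + G r φ pr pφ * Gr) (F r φ pr pφ * Fφ + G r φ pr pφ * Gφ)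
      (F r φ pr pφ * Fpr + G r φ pr pφ * Gpr) (F r φ pr pφ * Fpφ + G r φ pr pφ * Gpφ)
      r φ pr pφ :=
  ⟨hF.hasDerivAt_r.half_sq_add_sq hG.hasDerivAt_r, hF.hasDerivAt_φ.half_sq_add_sq hG.hasDerivAt_φ,
    hF.hasDerivAt_pr.half_sq_add_sq hG.hasDerivAt_pr,
    hF.hasDerivAt_pφ.half_sq_add_sq hG.hasDerivAt_pφ⟩

end HasPartialsAt

variable (n : ℝ) {r : ℝ} (φ pr pφ : ℝ)

theorem Tkin_eq_half_sq_add_sq (hr : 0 < r) :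
    Tkin n r φ pr pφ = (P1 n r φ pr pφ ^ 2 + P2 n r φ pr pφ ^ 2) / 2 := by
  have hrn : r ^ (2 * n) = r ^ n * r ^ n := by rw [two_mul, Real.rpow_add hr]
  rw [Tkin, P1, P2, hrn]
  field_simp
  linear_combination -(pr ^ 2 * r ^ 2 + pφ ^ 2) * sin_sq_add_cos_sq ((n - 1) * φ)

theorem hasPartialsAt_P1 (hr : 0 < r) :
    HasPartialsAt (P1 n)
      (r ^ n * (n * pr * cos ((n - 1) * φ) + (n - 1) * pφ / r * sin ((n - 1) * φ)) / r)
      (-(n - 1) * P2 n r φ pr pφ) (r ^ n * cos ((n - 1) * φ)) (r ^ n * sin ((n - 1) * φ) / r)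
      r φ pr pφ := by
  have hk := hasDerivAt_const_mul (x := φ) (n - 1)
  refine ⟨?_, ?_, ?_, ?_⟩
  · refine ((Real.hasDerivAt_rpow_const (p := n) (Or.inl hr.ne')).mul
      ((((hasDerivAt_const r pφ).div (hasDerivAt_id' r) hr.ne').mul_const _).const_add _)
      ).congr_deriv ?_
    simp only [Pi.div_apply, Real.rpow_sub_one hr.ne']
    field_simp
    ring
  · exact (((hk.cos.const_mul pr).add (hk.sin.const_mul (pφ / r))).const_mul (r ^ n)).congr_deriv
      (by rw [P2]; ring)
  · exact ((((hasDerivAt_id' pr).mul_const _).add_const _).const_mul _).congr_deriv (by ring)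
  · exact (((((hasDerivAt_id' pφ).div_const r).mul_const _).const_add _).const_mul _).congr_deriv
      (by ring)

theorem hasPartialsAt_P2 (hr : 0 < r) :
    HasPartialsAt (P2 n)
      (r ^ n * (n * pr * sin ((n - 1) * φ) - (n - 1) * pφ / r * cos ((n - 1) * φ)) / r)
      ((n - 1) * P1 n r φ pr pφ) (r ^ n * sin ((n - 1) * φ)) (-(r ^ n * cos ((n - 1) * φ) / r))
      r φ pr pφ := by
  have hk := hasDerivAt_const_mul (x := φ) (n - 1)
  refine ⟨?_, ?_, ?_, ?_⟩
  · refine ((Real.hasDerivAt_rpow_const (p := n) (Or.inl hr.ne')).mul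
      ((hasDerivAt_const r _).sub
        (((hasDerivAt_const r pφ).div (hasDerivAt_id' r) hr.ne').mul_const _))).congr_deriv ?_
    simp only [Pi.div_apply, Pi.sub_apply, Real.rpow_sub_one hr.ne']
    field_simp
    ring
  · exact (((hk.sin.const_mul pr).sub (hk.cos.const_mul (pφ / r))).const_mul (r ^ n)).congr_deriv
      (by rw [P1]; ring)
  · exact ((((hasDerivAt_id' pr).mul_const _).sub_const _).const_mul _).congr_deriv (by ring)
  · exact (((((hasDerivAt_id' pφ).div_const r).mul_const _).const_sub _).const_mul _).congr_deriv
      (by ring)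

theorem pb_P1_P2_eq_zero (hr : 0 < r) : pb (P1 n) (P2 n) r φ pr pφ = 0 := by
  rw [(hasPartialsAt_P1 n φ pr pφ hr).pb_eq (hasPartialsAt_P2 n φ pr pφ hr), P1, P2]
  field_simp
  ring

/-- The Noether momenta P₁, P₂ and p_φ Poisson-commute with the kinetic
Hamiltonian T_n on Ω = {r > 0}. -/
theorem noether_momenta_commute_with_Tkin (n : ℝ) :
    ∀ r φ pr pφ : ℝ, 0 < r →
      pb (P1 n) (Tkin n) r φ pr pφ = 0 ∧
      pb (P2 n) (Tkin n) r φ pr pφ = 0 ∧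
      pb (fun _ _ _ p => p) (Tkin n) r φ pr pφ = 0 := by
  intro r φ pr pφ hr
  have hP1 := hasPartialsAt_P1 n φ pr pφ hr
  have hP2 := hasPartialsAt_P2 n φ pr pφ hr
  have hT := (hP1.half_sq_add_sq hP2).congr_of_eventuallyEq <|
    eventually_gt_nhds hr |>.mono fun x hx => by
      ext φ pr pφ
      exact Tkin_eq_half_sq_add_sq n φ pr pφ hx
  have hpφ : HasPartialsAt (fun _ _ _ p => p) 0 0 0 1 r φ pr pφ :=
    ⟨hasDerivAt_const _ _, hasDerivAt_const _ _, hasDerivAt_const _ _, hasDerivAt_id' _⟩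
  have h12 := (hP1.pb_eq hP2).symm.trans (pb_P1_P2_eq_zero n φ pr pφ hr)
  refine ⟨?_, ?_, ?_⟩
  · rw [hP1.pb_eq hT]
    linear_combination P2 n r φ pr pφ * h12
  · rw [hP2.pb_eq hT]
    linear_combination -P1 n r φ pr pφ * h12
  · rw [hpφ.pb_eq hT]
    ring
end

section
/- Let n ∈ ℝ, n ≠ 1, k_n = n − 1, k₀ ∈ ℝ, and consider the Hamiltonian H_na = T_n + k₀/r^{2k_n} on Ω = {r > 0}. Then the three functions J₁ = p_φ, J₁₁ = P₁² + 2(k₀/r^{2k_n}) cos²(k_n φ) and J₂₂ = P₂² + 2(k₀/r^{2k_n}) sin²(k_n φ) are constants of motion: {J₁, H_na} = 0, {J₁₁, H_na} = 0 and {J₂₂, H_na} = 0 at every point of Ω. -/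
open Real

/-- The Hamiltonian H_na = T_n + k₀/r^(2 k_n), k_n = n − 1. -/
noncomputable def Hna (n k0 : ℝ) (r φ pr pφ : ℝ) : ℝ :=
  Tkin n r φ pr pφ + k0 / r ^ (2*(n-1))

/-!
`H_na` does not depend on `φ`, so `{p_φ, H_na} = -∂H_na/∂φ = 0`. The two quadratic integrals are
the members `α = 0` and `α = -π/2` of the family
`J_α = (rⁿ (p_r cos(k_n φ + α) + (p_φ/r) sin(k_n φ + α)))² + 2 (k₀/r^{2k_n}) cos²(k_n φ + α)`,
and `{J_α, H_na} = 0` for every phase `α` by a direct computation of the partial derivatives: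
after writing `r^{2n} = (rⁿ)²` and `r^{2k_n} = (rⁿ)²/r²` the bracket is a rational identity in
`r, p_r, p_φ, rⁿ, cos, sin`.
-/

lemma pb_eq_of_hasDerivAt {F G : ℝ → ℝ → ℝ → ℝ → ℝ}
    {r φ pr pφ Fr Fφ Fpr Fpφ Gr Gφ Gpr Gpφ : ℝ}
    (hFr : HasDerivAt (fun x => F x φ pr pφ) Fr r) (hFφ : HasDerivAt (fun x => F r x pr pφ) Fφ φ)
    (hFpr : HasDerivAt (fun x => F r φ x pφ) Fpr pr)
    (hFpφ : HasDerivAt (fun x => F r φ pr x) Fpφ pφ)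
    (hGr : HasDerivAt (fun x => G x φ pr pφ) Gr r) (hGφ : HasDerivAt (fun x => G r x pr pφ) Gφ φ)
    (hGpr : HasDerivAt (fun x => G r φ x pφ) Gpr pr)
    (hGpφ : HasDerivAt (fun x => G r φ pr x) Gpφ pφ) :
    pb F G r φ pr pφ = Fr * Gpr - Fpr * Gr + Fφ * Gpφ - Fpφ * Gφ := by
  rw [pb, hFr.deriv, hFφ.deriv, hFpr.deriv, hFpφ.deriv, hGr.deriv, hGφ.deriv, hGpr.deriv,
    hGpφ.deriv]

section Rpow

variable {r : ℝ} (hr : 0 < r) (p : ℝ)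
include hr

lemma hasDerivAt_rpow_const_of_pos : HasDerivAt (fun x : ℝ => x ^ p) (p * r ^ p / r) r := by
  simpa [rpow_sub_one hr.ne', mul_div_assoc] using hasDerivAt_rpow_const (p := p) (Or.inl hr.ne')

lemma hasDerivAt_const_div_rpow (k : ℝ) :
    HasDerivAt (fun x : ℝ => k / x ^ p) (-(p * k) / (r * r ^ p)) r := by
  have hrp : r ^ p ≠ 0 := (rpow_pos_of_pos hr p).ne'
  refine ((hasDerivAt_const r k).div (hasDerivAt_rpow_const_of_pos hr p) hrp).congr_deriv ?_
  field_simp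
  ring

lemma rpow_two_mul : r ^ (2 * p) = (r ^ p) ^ 2 := by
  rw [mul_comm, ← Nat.cast_ofNat, rpow_mul_natCast hr.le]

lemma rpow_two_mul_sub_one : r ^ (2 * (p - 1)) = (r ^ p) ^ 2 / r ^ 2 := by
  rw [show 2 * (p - 1) = 2 * p - (2 : ℕ) by push_cast; ring, rpow_sub_natCast hr.ne',
    rpow_two_mul hr]

end Rpow

noncomputable def phasedMomentum (n α : ℝ) (r φ pr pφ : ℝ) : ℝ :=
  r ^ n * (pr * cos ((n-1)*φ + α) + (pφ / r) * sin ((n-1)*φ + α))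

noncomputable def phasedIntegral (n k0 α : ℝ) (r φ pr pφ : ℝ) : ℝ :=
  phasedMomentum n α r φ pr pφ ^ 2 + 2 * (k0 / r ^ (2*(n-1))) * cos ((n-1)*φ + α) ^ 2

lemma phasedIntegral_zero (n k0 : ℝ) :
    phasedIntegral n k0 0 = fun r φ pr pφ => (P1 n r φ pr pφ)^2
      + 2 * (k0 / r ^ (2*(n-1))) * (cos ((n-1)*φ))^2 := by
  funext r φ pr pφ
  simp only [phasedIntegral, phasedMomentum, P1, add_zero]

lemma phasedIntegral_neg_pi_div_two (n k0 : ℝ) :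
    phasedIntegral n k0 (-(π/2)) = fun r φ pr pφ => (P2 n r φ pr pφ)^2
      + 2 * (k0 / r ^ (2*(n-1))) * (sin ((n-1)*φ))^2 := by
  funext r φ pr pφ
  simp only [phasedIntegral, phasedMomentum, P2, ← sub_eq_add_neg, cos_sub_pi_div_two,
    sin_sub_pi_div_two]
  ring

section Derivatives

variable (n k0 α r φ pr pφ : ℝ)

lemma Hna_hasDerivAt_r (hr : 0 < r) :
    HasDerivAt (fun x => Hna n k0 x φ pr pφ)
      (n * r ^ (2*n) / r * (pr^2 + pφ^2/r^2) - r ^ (2*n) * pφ^2 / r^3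
        - 2*(n-1)*k0 / (r * r^(2*(n-1)))) r := by
  have hkin := ((hasDerivAt_rpow_const_of_pos hr (2*n)).const_mul (1/2 : ℝ)).mul
    ((hasDerivAt_const r (pr^2)).add ((hasDerivAt_const r (pφ^2)).div (hasDerivAt_pow 2 r)
      (pow_ne_zero 2 hr.ne')))
  refine (hkin.add (hasDerivAt_const_div_rpow hr (2*(n-1)) k0)).congr_deriv ?_
  simp only [Pi.add_apply, Pi.div_apply]
  field_simp
  ring

lemma Hna_hasDerivAt_φ : HasDerivAt (fun x => Hna n k0 r x pr pφ) 0 φ := by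
  unfold Hna Tkin
  exact hasDerivAt_const φ _

lemma Hna_hasDerivAt_pr : HasDerivAt (fun x => Hna n k0 r φ x pφ) (r^(2*n) * pr) pr := by
  refine ((((hasDerivAt_pow 2 pr).add_const (pφ^2/r^2)).const_mul (1/2 * r^(2*n))).add_const
    (k0 / r^(2*(n-1)))).congr_deriv ?_
  ring

lemma Hna_hasDerivAt_pφ : HasDerivAt (fun x => Hna n k0 r φ pr x) (r^(2*n) * pφ / r^2) pφ := by
  refine (((((hasDerivAt_pow 2 pφ).div_const (r^2)).const_add (pr^2)).const_mul
    (1/2 * r^(2*n))).add_const (k0 / r^(2*(n-1)))).congr_deriv ?_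
  ring

lemma phasedMomentum_hasDerivAt_r (hr : 0 < r) :
    HasDerivAt (fun x => phasedMomentum n α x φ pr pφ)
      (n * r^n / r * (pr * cos ((n-1)*φ + α) + pφ / r * sin ((n-1)*φ + α))
        - r^n * pφ * sin ((n-1)*φ + α) / r^2) r := by
  have hinner := (((hasDerivAt_const r pφ).div (hasDerivAt_id r) hr.ne').mul_const
    (sin ((n-1)*φ + α))).const_add (pr * cos ((n-1)*φ + α))
  refine ((hasDerivAt_rpow_const_of_pos hr n).mul hinner).congr_deriv ?_
  simp only [Pi.div_apply, id_eq]
  field_simp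
  ring

lemma phasedMomentum_hasDerivAt_φ :
    HasDerivAt (fun x => phasedMomentum n α r x pr pφ)
      ((n-1) * r^n * (pφ / r * cos ((n-1)*φ + α) - pr * sin ((n-1)*φ + α))) φ := by
  have hphase := ((hasDerivAt_id φ).const_mul (n-1)).add_const α
  refine (((hphase.cos.const_mul pr).add (hphase.sin.const_mul (pφ / r))).const_mul
    (r^n)).congr_deriv ?_
  simp only [id_eq]
  ring

lemma phasedMomentum_hasDerivAt_pr :
    HasDerivAt (fun x => phasedMomentum n α r φ x pφ) (r^n * cos ((n-1)*φ + α)) pr := by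
  refine ((((hasDerivAt_id pr).mul_const (cos ((n-1)*φ + α))).add_const
    (pφ / r * sin ((n-1)*φ + α))).const_mul (r^n)).congr_deriv ?_
  ring

lemma phasedMomentum_hasDerivAt_pφ :
    HasDerivAt (fun x => phasedMomentum n α r φ pr x) (r^n * sin ((n-1)*φ + α) / r) pφ := by
  refine (((((hasDerivAt_id pφ).div_const r).mul_const (sin ((n-1)*φ + α))).const_add
    (pr * cos ((n-1)*φ + α))).const_mul (r^n)).congr_deriv ?_
  ring

end Derivatives

lemma pb_phasedIntegral_Hna (n k0 α r φ pr pφ : ℝ) (hr : 0 < r) :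
    pb (phasedIntegral n k0 α) (Hna n k0) r φ pr pφ = 0 := by
  have hrn : r ^ n ≠ 0 := (rpow_pos_of_pos hr n).ne'
  have hphase := ((hasDerivAt_id φ).const_mul (n-1)).add_const α
  have hJr := ((phasedMomentum_hasDerivAt_r n α r φ pr pφ hr).pow 2).add
    (((hasDerivAt_const_div_rpow hr (2*(n-1)) k0).const_mul 2).mul_const
      (cos ((n-1)*φ + α) ^ 2))
  have hJφ := ((phasedMomentum_hasDerivAt_φ n α r φ pr pφ).pow 2).add
    ((hphase.cos.pow 2).const_mul (2 * (k0 / r ^ (2*(n-1)))))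
  have hJpr := ((phasedMomentum_hasDerivAt_pr n α r φ pr pφ).pow 2).add_const
    (2 * (k0 / r ^ (2*(n-1))) * cos ((n-1)*φ + α) ^ 2)
  have hJpφ := ((phasedMomentum_hasDerivAt_pφ n α r φ pr pφ).pow 2).add_const
    (2 * (k0 / r ^ (2*(n-1))) * cos ((n-1)*φ + α) ^ 2)
  rw [pb_eq_of_hasDerivAt hJr hJφ hJpr hJpφ (Hna_hasDerivAt_r n k0 r φ pr pφ hr)
    (Hna_hasDerivAt_φ n k0 r φ pr pφ) (Hna_hasDerivAt_pr n k0 r φ pr pφ)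
    (Hna_hasDerivAt_pφ n k0 r φ pr pφ)]
  norm_num only [phasedMomentum, id_eq]
  rw [rpow_two_mul_sub_one hr, rpow_two_mul hr]
  field_simp
  ring

theorem Hna_superintegrable_general (n k0 : ℝ) :
    ∀ r φ pr pφ : ℝ, 0 < r →
      pb (fun _ _ _ p => p) (Hna n k0) r φ pr pφ = 0 ∧
      pb (fun r φ pr pφ => (P1 n r φ pr pφ)^2
            + 2 * (k0 / r ^ (2*(n-1))) * (cos ((n-1)*φ))^2) (Hna n k0) r φ pr pφ = 0 ∧
      pb (fun r φ pr pφ => (P2 n r φ pr pφ)^2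
            + 2 * (k0 / r ^ (2*(n-1))) * (sin ((n-1)*φ))^2) (Hna n k0) r φ pr pφ = 0 := by
  intro r φ pr pφ hr
  refine ⟨?_, ?_, ?_⟩
  · rw [pb_eq_of_hasDerivAt (hasDerivAt_const r pφ) (hasDerivAt_const φ pφ)
      (hasDerivAt_const pr pφ) (hasDerivAt_id pφ) (Hna_hasDerivAt_r n k0 r φ pr pφ hr)
      (Hna_hasDerivAt_φ n k0 r φ pr pφ) (Hna_hasDerivAt_pr n k0 r φ pr pφ)
      (Hna_hasDerivAt_pφ n k0 r φ pr pφ)]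
    ring
  · rw [← phasedIntegral_zero]
    exact pb_phasedIntegral_Hna n k0 0 r φ pr pφ hr
  · rw [← phasedIntegral_neg_pi_div_two]
    exact pb_phasedIntegral_Hna n k0 _ r φ pr pφ hr

/-- J₁ = p_φ, J₁₁ = P₁² + 2(k₀/r^(2k_n)) cos²(k_n φ) and
J₂₂ = P₂² + 2(k₀/r^(2k_n)) sin²(k_n φ) are constants of motion of H_na on Ω = {r > 0}. -/
theorem Hna_superintegrable (n k0 : ℝ) (hn : n ≠ 1) :
    ∀ r φ pr pφ : ℝ, 0 < r →
      pb (fun _ _ _ p => p) (Hna n k0) r φ pr pφ = 0 ∧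
      pb (fun r φ pr pφ => (P1 n r φ pr pφ)^2
            + 2 * (k0 / r ^ (2*(n-1))) * (cos ((n-1)*φ))^2) (Hna n k0) r φ pr pφ = 0 ∧
      pb (fun r φ pr pφ => (P2 n r φ pr pφ)^2
            + 2 * (k0 / r ^ (2*(n-1))) * (sin ((n-1)*φ))^2) (Hna n k0) r φ pr pφ = 0 :=
  Hna_superintegrable_general n k0
end

section
/- Let n ∈ ℝ, k_n = n − 1, and k₀, k₁, k₂ ∈ ℝ. Consider the Hamiltonian H_nb = T_n + U_nb with U_nb = (k₀/r^{2k_n})(cos²(k_n φ) + 4 sin²(k_n φ)) + r^{2k_n} k₁/cos²(k_n φ) + (k₂/r^{k_n}) sin(k_n φ), defined on the open subset of Ω = {r > 0} where cos(k_n φ) ≠ 0. Then the two functions J_b1 = P₁² + 2(k₀/r^{2k_n}) cos²(k_n φ) + 2k₁ r^{2k_n} sec²(k_n φ) and J_b2 = P₂² + 8(k₀/r^{2k_n}) sin²(k_n φ) + (2k₂/r^{k_n}) sin(k_n φ) are constants of motion: {J_b1, H_nb} = 0 and {J_b2, H_nb} = 0 at every point of that open set. -/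
open Real

/-- The Hamiltonian H_nb = T_n + U_nb with
U_nb = (k₀/r^(2k_n))(cos²(k_n φ) + 4 sin²(k_n φ)) + r^(2k_n) k₁/cos²(k_n φ)
      + (k₂/r^(k_n)) sin(k_n φ). -/
noncomputable def Hnb (n k0 k1 k2 : ℝ) (r φ pr pφ : ℝ) : ℝ :=
  Tkin n r φ pr pφ
    + (k0 / r ^ (2*(n-1))) * ((cos ((n-1)*φ))^2 + 4 * (sin ((n-1)*φ))^2)
    + r ^ (2*(n-1)) * k1 / (cos ((n-1)*φ))^2
    + (k2 / r ^ (n-1)) * sin ((n-1)*φ)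

/-!
The Hamiltonian is the mean of the two integrals: `P₁² + P₂² = 2 T_n` and the potential of
`H_nb` is half the sum of those of `J_b1` and `J_b2`. Hence `{J_b1, H_nb} = ½ {J_b1, J_b2}` and
`{J_b2, H_nb} = -½ {J_b1, J_b2}`, and everything reduces to `J_b1` and `J_b2` being in involution.
That holds because, for `n ≠ 1`, the flat coordinates `X + iY = -(r e^{iφ})^{-k_n} / k_n` make
`P₁, P₂` Cartesian momenta and separate the system, `J_b1` depending on `(X, P_X)` only and `J_b2`
on `(Y, P_Y)` only. In the original coordinates the bracket is a direct computation in which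
every term cancels, without even using `cos² + sin² = 1`.
-/

theorem hasDerivAt_rpow_const_of_ne_zero {p r : ℝ} (hr : r ≠ 0) :
    HasDerivAt (fun x : ℝ => x ^ p) (p * r ^ p / r) r := by
  simpa [rpow_sub_one hr, mul_div_assoc] using hasDerivAt_rpow_const (p := p) (Or.inl hr)

structure HasPhaseGradAt (F : ℝ → ℝ → ℝ → ℝ → ℝ) (Fr Fφ Fpr Fpφ r φ pr pφ : ℝ) : Prop where
  dr : HasDerivAt (fun x => F x φ pr pφ) Fr r
  dφ : HasDerivAt (fun x => F r x pr pφ) Fφ φ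
  dpr : HasDerivAt (fun x => F r φ x pφ) Fpr pr
  dpφ : HasDerivAt (fun x => F r φ pr x) Fpφ pφ

namespace HasPhaseGradAt

variable {F G : ℝ → ℝ → ℝ → ℝ → ℝ} {a b c d a' b' c' d' r φ pr pφ : ℝ}

theorem pb_eq (hF : HasPhaseGradAt F a b c d r φ pr pφ)
    (hG : HasPhaseGradAt G a' b' c' d' r φ pr pφ) :
    pb F G r φ pr pφ = a * c' - c * a' + b * d' - d * b' := by
  rw [pb, hF.dr.deriv, hF.dφ.deriv, hF.dpr.deriv, hF.dpφ.deriv,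
    hG.dr.deriv, hG.dφ.deriv, hG.dpr.deriv, hG.dpφ.deriv]

theorem add (hF : HasPhaseGradAt F a b c d r φ pr pφ)
    (hG : HasPhaseGradAt G a' b' c' d' r φ pr pφ) :
    HasPhaseGradAt (fun r φ pr pφ => F r φ pr pφ + G r φ pr pφ)
      (a + a') (b + b') (c + c') (d + d') r φ pr pφ :=
  ⟨hF.dr.add hG.dr, hF.dφ.add hG.dφ, hF.dpr.add hG.dpr, hF.dpφ.add hG.dpφ⟩

theorem div_const (hF : HasPhaseGradAt F a b c d r φ pr pφ) (e : ℝ) :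
    HasPhaseGradAt (fun r φ pr pφ => F r φ pr pφ / e) (a / e) (b / e) (c / e) (d / e)
      r φ pr pφ :=
  ⟨hF.dr.div_const e, hF.dφ.div_const e, hF.dpr.div_const e, hF.dpφ.div_const e⟩

theorem congr_of_pos (hF : HasPhaseGradAt F a b c d r φ pr pφ) (hr : 0 < r)
    (h : ∀ x > 0, ∀ y u v, G x y u v = F x y u v) : HasPhaseGradAt G a b c d r φ pr pφ :=
  ⟨hF.dr.congr_of_eventuallyEq ((lt_mem_nhds hr).mono fun x hx => h x hx φ pr pφ),
    hF.dφ.congr_of_eventuallyEq (.of_forall fun y => h r hr y pr pφ),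
    hF.dpr.congr_of_eventuallyEq (.of_forall fun u => h r hr φ u pφ),
    hF.dpφ.congr_of_eventuallyEq (.of_forall fun v => h r hr φ pr v)⟩

end HasPhaseGradAt

noncomputable def Jb1 (n k0 k1 : ℝ) (r φ pr pφ : ℝ) : ℝ :=
  (P1 n r φ pr pφ)^2 + 2 * (k0 / r ^ (2*(n-1))) * (cos ((n-1)*φ))^2
    + 2 * k1 * r ^ (2*(n-1)) * (1 / cos ((n-1)*φ))^2

noncomputable def Jb2 (n k0 k2 : ℝ) (r φ pr pφ : ℝ) : ℝ :=
  (P2 n r φ pr pφ)^2 + 8 * (k0 / r ^ (2*(n-1))) * (sin ((n-1)*φ))^2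
    + (2 * k2 / r ^ (n-1)) * sin ((n-1)*φ)

theorem Hnb_eq_half_add (n k0 k1 k2 : ℝ) {r : ℝ} (hr : 0 < r) (φ pr pφ : ℝ) :
    Hnb n k0 k1 k2 r φ pr pφ = (Jb1 n k0 k1 r φ pr pφ + Jb2 n k0 k2 r φ pr pφ) / 2 := by
  have h2n : r ^ (2 * n) = (r ^ n) ^ 2 := by rw [two_mul, rpow_add hr, sq]
  simp only [Hnb, Tkin, Jb1, Jb2, P1, P2, h2n]
  linear_combination -(1/2) * (r ^ n) ^ 2 * (pr ^ 2 + pφ ^ 2 / r ^ 2) * sin_sq_add_cos_sq ((n-1)*φ)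

theorem hasPhaseGradAt_Jb1 (n k0 k1 : ℝ) {r φ : ℝ} (hr : 0 < r) (hc : cos ((n-1)*φ) ≠ 0)
    (pr pφ : ℝ) :
    HasPhaseGradAt (Jb1 n k0 k1)
      (2 * P1 n r φ pr pφ * r ^ n * (n * pr * cos ((n-1)*φ) + (n-1) * pφ / r * sin ((n-1)*φ)) / r
        - 4 * (n-1) * k0 * cos ((n-1)*φ) ^ 2 / (r ^ (2*(n-1)) * r)
        + 4 * (n-1) * k1 * r ^ (2*(n-1)) / (r * cos ((n-1)*φ) ^ 2))
      (-2 * (n-1) * P1 n r φ pr pφ * P2 n r φ pr pφ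
        - 4 * (n-1) * k0 * cos ((n-1)*φ) * sin ((n-1)*φ) / r ^ (2*(n-1))
        + 4 * (n-1) * k1 * r ^ (2*(n-1)) * sin ((n-1)*φ) / cos ((n-1)*φ) ^ 3)
      (2 * P1 n r φ pr pφ * r ^ n * cos ((n-1)*φ))
      (2 * P1 n r φ pr pφ * r ^ n * sin ((n-1)*φ) / r) r φ pr pφ := by
  have hr0 := hr.ne'
  have hB := (rpow_pos_of_pos hr (2*(n-1))).ne'
  have hθ : HasDerivAt (fun y => (n-1) * y) (n-1) φ := hasDerivAt_const_mul (n-1)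
  refine ⟨?_, ?_, ?_, ?_⟩
  · refine ((((hasDerivAt_rpow_const_of_ne_zero (p := n) hr0).mul
      ((((hasDerivAt_const r pφ).div (hasDerivAt_id r) hr0).mul_const
        (sin ((n-1)*φ))).const_add (pr * cos ((n-1)*φ)))).pow 2).add
      (((((hasDerivAt_const r k0).div (hasDerivAt_rpow_const_of_ne_zero (p := 2*(n-1)) hr0)
        hB).const_mul 2).mul_const (cos ((n-1)*φ) ^ 2)))).add
      (((hasDerivAt_rpow_const_of_ne_zero (p := 2*(n-1)) hr0).const_mul (2 * k1)).mul_const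
        ((1 / cos ((n-1)*φ)) ^ 2)) |>.congr_deriv ?_
    simp only [P1, id, Pi.mul_apply, Pi.div_apply, Nat.cast_ofNat, Nat.add_one_sub_one, pow_one]
    field_simp
    ring
  · refine (((((hθ.cos.const_mul pr).add (hθ.sin.const_mul (pφ / r))).const_mul (r ^ n)).pow 2).add
      ((hθ.cos.pow 2).const_mul (2 * (k0 / r ^ (2*(n-1)))))).add
      ((((hasDerivAt_const φ 1).div hθ.cos hc).pow 2).const_mul (2 * k1 * r ^ (2*(n-1))))
      |>.congr_deriv ?_
    simp only [P1, P2, Pi.add_apply, Pi.div_apply, Nat.cast_ofNat, Nat.add_one_sub_one, pow_one]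
    field_simp
    ring
  · refine (((((hasDerivAt_id' pr).mul_const (cos ((n-1)*φ))).add_const
      (pφ / r * sin ((n-1)*φ))).const_mul (r ^ n)).pow 2).add_const _ |>.add_const _
      |>.congr_deriv ?_
    simp only [P1, Nat.cast_ofNat, Nat.add_one_sub_one, pow_one]
    ring
  · refine (((((hasDerivAt_id' pφ).div_const r).mul_const (sin ((n-1)*φ))).const_add
      (pr * cos ((n-1)*φ))).const_mul (r ^ n)).pow 2 |>.add_const _ |>.add_const _
      |>.congr_deriv ?_
    simp only [P1, Nat.cast_ofNat, Nat.add_one_sub_one, pow_one]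
    ring

theorem hasPhaseGradAt_Jb2 (n k0 k2 : ℝ) {r : ℝ} (hr : 0 < r) (φ pr pφ : ℝ) :
    HasPhaseGradAt (Jb2 n k0 k2)
      (2 * P2 n r φ pr pφ * r ^ n * (n * pr * sin ((n-1)*φ) - (n-1) * pφ / r * cos ((n-1)*φ)) / r
        - 16 * (n-1) * k0 * sin ((n-1)*φ) ^ 2 / (r ^ (2*(n-1)) * r)
        - 2 * (n-1) * k2 * sin ((n-1)*φ) / (r ^ (n-1) * r))
      (2 * (n-1) * P1 n r φ pr pφ * P2 n r φ pr pφ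
        + 16 * (n-1) * k0 * sin ((n-1)*φ) * cos ((n-1)*φ) / r ^ (2*(n-1))
        + 2 * (n-1) * k2 * cos ((n-1)*φ) / r ^ (n-1))
      (2 * P2 n r φ pr pφ * r ^ n * sin ((n-1)*φ))
      (-2 * P2 n r φ pr pφ * r ^ n * cos ((n-1)*φ) / r) r φ pr pφ := by
  have hr0 := hr.ne'
  have hB := (rpow_pos_of_pos hr (2*(n-1))).ne'
  have hq := (rpow_pos_of_pos hr (n-1)).ne'
  have hθ : HasDerivAt (fun y => (n-1) * y) (n-1) φ := hasDerivAt_const_mul (n-1)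
  refine ⟨?_, ?_, ?_, ?_⟩
  · refine ((((hasDerivAt_rpow_const_of_ne_zero (p := n) hr0).mul
      ((((hasDerivAt_const r pφ).div (hasDerivAt_id r) hr0).mul_const
        (cos ((n-1)*φ))).const_sub (pr * sin ((n-1)*φ)))).pow 2).add
      (((((hasDerivAt_const r k0).div (hasDerivAt_rpow_const_of_ne_zero (p := 2*(n-1)) hr0)
        hB).const_mul 8).mul_const (sin ((n-1)*φ) ^ 2)))).add
      (((hasDerivAt_const r (2 * k2)).div (hasDerivAt_rpow_const_of_ne_zero (p := n-1) hr0)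
        hq).mul_const (sin ((n-1)*φ))) |>.congr_deriv ?_
    simp only [P2, id, Pi.mul_apply, Pi.div_apply, Nat.cast_ofNat, Nat.add_one_sub_one, pow_one]
    field_simp
    ring
  · refine (((((hθ.sin.const_mul pr).sub (hθ.cos.const_mul (pφ / r))).const_mul (r ^ n)).pow 2).add
      ((hθ.sin.pow 2).const_mul (8 * (k0 / r ^ (2*(n-1)))))).add
      (hθ.sin.const_mul (2 * k2 / r ^ (n-1))) |>.congr_deriv ?_
    simp only [P1, P2, Pi.sub_apply, Nat.cast_ofNat, Nat.add_one_sub_one, pow_one]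
    ring
  · refine (((((hasDerivAt_id' pr).mul_const (sin ((n-1)*φ))).sub_const
      (pφ / r * cos ((n-1)*φ))).const_mul (r ^ n)).pow 2).add_const _ |>.add_const _
      |>.congr_deriv ?_
    simp only [P2, Nat.cast_ofNat, Nat.add_one_sub_one, pow_one]
    ring
  · refine (((((hasDerivAt_id' pφ).div_const r).mul_const (cos ((n-1)*φ))).const_sub
      (pr * sin ((n-1)*φ))).const_mul (r ^ n)).pow 2 |>.add_const _ |>.add_const _
      |>.congr_deriv ?_
    simp only [P2, Nat.cast_ofNat, Nat.add_one_sub_one, pow_one]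
    ring

theorem pb_Jb1_Jb2 (n k0 k1 k2 : ℝ) {r φ : ℝ} (hr : 0 < r) (hc : cos ((n-1)*φ) ≠ 0)
    (pr pφ : ℝ) : pb (Jb1 n k0 k1) (Jb2 n k0 k2) r φ pr pφ = 0 := by
  rw [(hasPhaseGradAt_Jb1 n k0 k1 hr hc pr pφ).pb_eq (hasPhaseGradAt_Jb2 n k0 k2 hr φ pr pφ)]
  simp only [P1, P2]
  have := hr.ne'
  field_simp
  ring

/-- J_b1 and J_b2 are constants of motion of H_nb on the open subset of
Ω = {r > 0} where cos(k_n φ) ≠ 0. -/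
theorem Hnb_Jb1_Jb2_constants (n k0 k1 k2 : ℝ) :
    ∀ r φ pr pφ : ℝ, 0 < r → cos ((n-1)*φ) ≠ 0 →
      pb (fun r φ pr pφ => (P1 n r φ pr pφ)^2
            + 2 * (k0 / r ^ (2*(n-1))) * (cos ((n-1)*φ))^2
            + 2 * k1 * r ^ (2*(n-1)) * (1 / cos ((n-1)*φ))^2)
         (Hnb n k0 k1 k2) r φ pr pφ = 0 ∧
      pb (fun r φ pr pφ => (P2 n r φ pr pφ)^2
            + 8 * (k0 / r ^ (2*(n-1))) * (sin ((n-1)*φ))^2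
            + (2 * k2 / r ^ (n-1)) * sin ((n-1)*φ))
         (Hnb n k0 k1 k2) r φ pr pφ = 0 := by
  intro r φ pr pφ hr hc
  show pb (Jb1 n k0 k1) _ r φ pr pφ = 0 ∧ pb (Jb2 n k0 k2) _ r φ pr pφ = 0
  have hJ1 := hasPhaseGradAt_Jb1 n k0 k1 hr hc pr pφ
  have hJ2 := hasPhaseGradAt_Jb2 n k0 k2 hr φ pr pφ
  have hH := ((hJ1.add hJ2).div_const 2).congr_of_pos hr
    fun x hx y u v => Hnb_eq_half_add n k0 k1 k2 hx y u v
  have hinv := pb_Jb1_Jb2 n k0 k1 k2 hr hc pr pφ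
  rw [hJ1.pb_eq hJ2] at hinv
  rw [hJ1.pb_eq hH, hJ2.pb_eq hH]
  constructor
  · linear_combination hinv / 2
  · linear_combination -hinv / 2
end

section
/- Let n ∈ ℝ, k_n = n − 1, and k₀, k₁, k₂ ∈ ℝ. Consider the Hamiltonian H_nc2 = T_n + k₀ r^{n−1} + r^{2k_n}[k₁/cos²(k_n φ) + k₂ sin(k_n φ)/cos²(k_n φ)], defined on the open subset of Ω = {r > 0} where cos(k_n φ) ≠ 0. Then the two functions J_c2 = p_φ² + 2[k₁/cos²(k_n φ) + k₂ sin(k_n φ)/cos²(k_n φ)] and J_c3 = P₁ p_φ + k₀ sin(k_n φ) + 2k₁ r^{k_n} sec(k_n φ) tan(k_n φ) + k₂ r^{k_n}(sec²(k_n φ) + tan²(k_n φ)) are constants of motion: {J_c2, H_nc2} = 0 and {J_c3, H_nc2} = 0 at every point of that open set. -/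
/-!
Write `U(φ) = k₁/cos²(k_n φ) + k₂ sin(k_n φ)/cos²(k_n φ)`. The Hamiltonian
`H_nc2 = (1/2) r^{2n} p_r² + k₀ r^{k_n} + r^{2k_n} K` depends on `(φ, p_φ)` only through
`K = p_φ²/2 + U`, and `J_c2 = 2K`, so `{J_c2, H_nc2} = r^{2k_n} {2K, K} = 0`.
For `J_c3` the kinetic terms cancel because the Noether momentum `P₁` and `p_φ` both commute
with `T_n`, and what is left of the potential terms is a multiple of `sin² + cos² - 1`.
-/
open Real

/-- The Hamiltonian H_nc2 = T_n + k₀ r^(n−1)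
      + r^(2k_n)[k₁/cos²(k_n φ) + k₂ sin(k_n φ)/cos²(k_n φ)]. -/
noncomputable def Hnc2 (n k0 k1 k2 : ℝ) (r φ pr pφ : ℝ) : ℝ :=
  Tkin n r φ pr pφ + k0 * r ^ (n-1)
    + r ^ (2*(n-1)) * (k1 / (cos ((n-1)*φ))^2 + k2 * sin ((n-1)*φ) / (cos ((n-1)*φ))^2)

theorem rpow_two_mul_eq_sq {r : ℝ} (hr : 0 ≤ r) (x : ℝ) : r ^ (2 * x) = (r ^ x) ^ 2 := by
  rw [mul_comm, ← Real.rpow_mul_natCast hr]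
  norm_num

theorem hasDerivAt_cos_mul (a x : ℝ) :
    HasDerivAt (fun y => cos (a * y)) (-sin (a * x) * a) x := by
  simpa using ((hasDerivAt_id x).const_mul a).cos

theorem hasDerivAt_sin_mul (a x : ℝ) :
    HasDerivAt (fun y => sin (a * y)) (cos (a * x) * a) x := by
  simpa using ((hasDerivAt_id x).const_mul a).sin

structure HasPartialDerivsAt (F : ℝ → ℝ → ℝ → ℝ → ℝ) (r φ pr pφ Fr Fφ Fpr Fpφ : ℝ) : Prop where
  dr : HasDerivAt (fun x => F x φ pr pφ) Fr r
  dφ : HasDerivAt (fun x => F r x pr pφ) Fφ φ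
  dpr : HasDerivAt (fun x => F r φ x pφ) Fpr pr
  dpφ : HasDerivAt (fun x => F r φ pr x) Fpφ pφ

theorem HasPartialDerivsAt.pb_eq {F G : ℝ → ℝ → ℝ → ℝ → ℝ}
    {r φ pr pφ Fr Fφ Fpr Fpφ Gr Gφ Gpr Gpφ : ℝ}
    (hF : HasPartialDerivsAt F r φ pr pφ Fr Fφ Fpr Fpφ)
    (hG : HasPartialDerivsAt G r φ pr pφ Gr Gφ Gpr Gpφ) :
    pb F G r φ pr pφ = Fr * Gpr - Fpr * Gr + Fφ * Gpφ - Fpφ * Gφ := by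
  rw [pb, hF.dr.deriv, hF.dφ.deriv, hF.dpr.deriv, hF.dpφ.deriv,
    hG.dr.deriv, hG.dφ.deriv, hG.dpr.deriv, hG.dpφ.deriv]

section

variable {n k0 k1 k2 r φ pr pφ : ℝ}

noncomputable def angularPotential (n k1 k2 φ : ℝ) : ℝ :=
  k1 / (cos ((n-1)*φ))^2 + k2 * sin ((n-1)*φ) / (cos ((n-1)*φ))^2

theorem hasDerivAt_angularPotential (hc : cos ((n-1)*φ) ≠ 0) :
    HasDerivAt (angularPotential n k1 k2)
      ((n-1) * (2*k1*sin ((n-1)*φ) + k2*(1 + sin ((n-1)*φ)^2)) / cos ((n-1)*φ)^3) φ := by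
  have hcos2 := (hasDerivAt_cos_mul (n-1) φ).pow 2
  have h := ((hasDerivAt_const φ k1).div hcos2 (pow_ne_zero 2 hc)).add
    (((hasDerivAt_sin_mul (n-1) φ).const_mul k2).div hcos2 (pow_ne_zero 2 hc))
  refine h.congr_deriv ?_
  simp only [Pi.pow_apply]
  field_simp
  linear_combination ((n-1) * k2 * cos ((n-1)*φ)) * sin_sq_add_cos_sq ((n-1)*φ)

noncomputable def Jc2 (n k1 k2 : ℝ) (_r φ _pr pφ : ℝ) : ℝ :=
  pφ^2 + 2 * angularPotential n k1 k2 φ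

noncomputable def Jc3 (n k0 k1 k2 : ℝ) (r φ pr pφ : ℝ) : ℝ :=
  P1 n r φ pr pφ * pφ + k0 * sin ((n-1)*φ)
    + 2 * k1 * r ^ (n-1) * ((1 / cos ((n-1)*φ)) * (sin ((n-1)*φ) / cos ((n-1)*φ)))
    + k2 * r ^ (n-1) * ((1 / cos ((n-1)*φ))^2 + (sin ((n-1)*φ) / cos ((n-1)*φ))^2)

theorem hasPartialDerivsAt_Hnc2 (hr : 0 < r) (hc : cos ((n-1)*φ) ≠ 0) :
    HasPartialDerivsAt (Hnc2 n k0 k1 k2) r φ pr pφ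
      (n * (r^(n-1))^2 * r * pr^2 + (n-1) * (r^(n-1))^2 * pφ^2 / r + (n-1) * k0 * r^(n-1) / r
        + 2 * (n-1) * (r^(n-1))^2 * angularPotential n k1 k2 φ / r)
      ((r^(n-1))^2 * ((n-1) * (2*k1*sin ((n-1)*φ) + k2*(1 + sin ((n-1)*φ)^2)) / cos ((n-1)*φ)^3))
      ((r^(n-1))^2 * r^2 * pr)
      ((r^(n-1))^2 * pφ) where
  dr := by
    have hr0 := hr.ne'
    have hkin := ((hasDerivAt_rpow_const (p := 2*n) (Or.inl hr0)).const_mul (1/2 : ℝ)).mul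
      (((hasDerivAt_const r (pφ^2)).div (hasDerivAt_pow 2 r) (pow_ne_zero 2 hr0)).const_add (pr^2))
    have h := (hkin.add ((hasDerivAt_rpow_const (p := n-1) (Or.inl hr0)).const_mul k0)).add
      ((hasDerivAt_rpow_const (p := 2*(n-1)) (Or.inl hr0)).mul_const (angularPotential n k1 k2 φ))
    refine h.congr_deriv ?_
    simp only [rpow_sub_one hr0, rpow_two_mul_eq_sq hr.le, Pi.div_apply]
    field_simp
    ring
  dφ := by
    have h := ((hasDerivAt_angularPotential (k1 := k1) (k2 := k2) hc).const_mul
      (r ^ (2*(n-1)))).const_add (Tkin n r φ pr pφ + k0 * r ^ (n-1))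
    exact h.congr_deriv (by rw [rpow_two_mul_eq_sq hr.le])
  dpr := by
    have h := ((((hasDerivAt_pow 2 pr).add_const (pφ^2/r^2)).const_mul
      ((1/2) * r ^ (2*n))).add_const (k0 * r^(n-1))).add_const
      (r ^ (2*(n-1)) * angularPotential n k1 k2 φ)
    refine h.congr_deriv ?_
    simp only [rpow_sub_one hr.ne', rpow_two_mul_eq_sq hr.le]
    field_simp
    ring
  dpφ := by
    have h := (((((hasDerivAt_pow 2 pφ).div_const (r^2)).const_add (pr^2)).const_mul
      ((1/2) * r ^ (2*n))).add_const (k0 * r^(n-1))).add_const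
      (r ^ (2*(n-1)) * angularPotential n k1 k2 φ)
    refine h.congr_deriv ?_
    simp only [rpow_sub_one hr.ne', rpow_two_mul_eq_sq hr.le]
    field_simp
    ring

theorem hasPartialDerivsAt_Jc2 (hc : cos ((n-1)*φ) ≠ 0) :
    HasPartialDerivsAt (Jc2 n k1 k2) r φ pr pφ
      0 (2 * ((n-1) * (2*k1*sin ((n-1)*φ) + k2*(1 + sin ((n-1)*φ)^2)) / cos ((n-1)*φ)^3))
      0 (2 * pφ) where
  dr := hasDerivAt_const r _
  dφ := ((hasDerivAt_angularPotential hc).const_mul 2).const_add (pφ^2)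
  dpr := hasDerivAt_const pr _
  dpφ := ((hasDerivAt_pow 2 pφ).add_const (2 * angularPotential n k1 k2 φ)).congr_deriv (by simp)

theorem hasPartialDerivsAt_Jc3 (hr : 0 < r) (hc : cos ((n-1)*φ) ≠ 0) :
    HasPartialDerivsAt (Jc3 n k0 k1 k2) r φ pr pφ
      (n * r^(n-1) * pr * pφ * cos ((n-1)*φ) + (n-1) * r^(n-1) * pφ^2 * sin ((n-1)*φ) / r
        + (n-1) * r^(n-1) * (2*k1*sin ((n-1)*φ) + k2*(1 + sin ((n-1)*φ)^2)) / (r * cos ((n-1)*φ)^2))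
      ((n-1) * (-(r^(n-1) * r * pr * pφ * sin ((n-1)*φ)) + r^(n-1) * pφ^2 * cos ((n-1)*φ)
        + k0 * cos ((n-1)*φ)
        + 2 * r^(n-1) * (k1*(1 + sin ((n-1)*φ)^2) + 2*k2*sin ((n-1)*φ)) / cos ((n-1)*φ)^3))
      (r^(n-1) * r * pφ * cos ((n-1)*φ))
      (r^(n-1) * r * pr * cos ((n-1)*φ) + 2 * r^(n-1) * pφ * sin ((n-1)*φ)) where
  dr := by
    have hr0 := hr.ne'
    have hρ := hasDerivAt_rpow_const (p := n-1) (Or.inl hr0)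
    have hP := (((hasDerivAt_rpow_const (p := n) (Or.inl hr0)).mul
      ((((hasDerivAt_const r pφ).div (hasDerivAt_id r) hr0).mul_const (sin ((n-1)*φ))).const_add
        (pr * cos ((n-1)*φ)))).mul_const pφ).add_const (k0 * sin ((n-1)*φ))
    have h := (hP.add ((hρ.const_mul (2*k1)).mul_const
        ((1 / cos ((n-1)*φ)) * (sin ((n-1)*φ) / cos ((n-1)*φ))))).add
      ((hρ.const_mul k2).mul_const ((1 / cos ((n-1)*φ))^2 + (sin ((n-1)*φ) / cos ((n-1)*φ))^2))
    refine h.congr_deriv ?_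
    simp only [rpow_sub_one hr0, Pi.div_apply, id]
    field_simp
    ring
  dφ := by
    have hsec := (hasDerivAt_const φ (1:ℝ)).div (hasDerivAt_cos_mul (n-1) φ) hc
    have htan := (hasDerivAt_sin_mul (n-1) φ).div (hasDerivAt_cos_mul (n-1) φ) hc
    have hP := ((((hasDerivAt_cos_mul (n-1) φ).const_mul pr).add
      ((hasDerivAt_sin_mul (n-1) φ).const_mul (pφ / r))).const_mul (r^n)).mul_const pφ
    have h := ((hP.add ((hasDerivAt_sin_mul (n-1) φ).const_mul k0)).add
      ((hsec.mul htan).const_mul (2*k1*r^(n-1)))).add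
      (((hsec.pow 2).add (htan.pow 2)).const_mul (k2*r^(n-1)))
    refine h.congr_deriv ?_
    norm_num only [rpow_sub_one hr.ne', Pi.div_apply]
    field_simp
    linear_combination (2 * (n-1) * r^n * (k1 + k2 * sin ((n-1)*φ))) * sin_sq_add_cos_sq ((n-1)*φ)
  dpr := by
    have h := (((((((hasDerivAt_id pr).mul_const (cos ((n-1)*φ))).add_const
      ((pφ / r) * sin ((n-1)*φ))).const_mul (r^n)).mul_const pφ).add_const
      (k0 * sin ((n-1)*φ))).add_const
      (2 * k1 * r ^ (n-1) * ((1 / cos ((n-1)*φ)) * (sin ((n-1)*φ) / cos ((n-1)*φ))))).add_const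
      (k2 * r ^ (n-1) * ((1 / cos ((n-1)*φ))^2 + (sin ((n-1)*φ) / cos ((n-1)*φ))^2))
    refine h.congr_deriv ?_
    rw [rpow_sub_one hr.ne']
    field_simp
  dpφ := by
    have hP := ((((hasDerivAt_id pφ).div_const r).mul_const (sin ((n-1)*φ))).const_add
      (pr * cos ((n-1)*φ))).const_mul (r^n)
    have h := (((hP.mul (hasDerivAt_id pφ)).add_const (k0 * sin ((n-1)*φ))).add_const
      (2 * k1 * r ^ (n-1) * ((1 / cos ((n-1)*φ)) * (sin ((n-1)*φ) / cos ((n-1)*φ))))).add_const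
      (k2 * r ^ (n-1) * ((1 / cos ((n-1)*φ))^2 + (sin ((n-1)*φ) / cos ((n-1)*φ))^2))
    refine h.congr_deriv ?_
    simp only [rpow_sub_one hr.ne', id]
    field_simp
    ring

theorem pb_Jc2_Hnc2 (hr : 0 < r) (hc : cos ((n-1)*φ) ≠ 0) :
    pb (Jc2 n k1 k2) (Hnc2 n k0 k1 k2) r φ pr pφ = 0 := by
  rw [(hasPartialDerivsAt_Jc2 hc).pb_eq (hasPartialDerivsAt_Hnc2 hr hc)]
  ring

theorem pb_Jc3_Hnc2 (hr : 0 < r) (hc : cos ((n-1)*φ) ≠ 0) :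
    pb (Jc3 n k0 k1 k2) (Hnc2 n k0 k1 k2) r φ pr pφ = 0 := by
  rw [(hasPartialDerivsAt_Jc3 hr hc).pb_eq (hasPartialDerivsAt_Hnc2 hr hc), angularPotential]
  field_simp
  linear_combination (-2 * (n-1) * (r^(n-1))^3 * pφ * (k1 + k2 * sin ((n-1)*φ)))
    * sin_sq_add_cos_sq ((n-1)*φ)

end

/-- J_c2 and J_c3 are constants of motion of H_nc2 on the open subset of
Ω = {r > 0} where cos(k_n φ) ≠ 0. -/
theorem Hnc2_superintegrable (n k0 k1 k2 : ℝ) :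
    ∀ r φ pr pφ : ℝ, 0 < r → cos ((n-1)*φ) ≠ 0 →
      pb (fun _ φ _ pφ => pφ^2
            + 2 * (k1 / (cos ((n-1)*φ))^2 + k2 * sin ((n-1)*φ) / (cos ((n-1)*φ))^2))
         (Hnc2 n k0 k1 k2) r φ pr pφ = 0 ∧
      pb (fun r φ pr pφ => P1 n r φ pr pφ * pφ + k0 * sin ((n-1)*φ)
            + 2 * k1 * r ^ (n-1) * ((1 / cos ((n-1)*φ)) * (sin ((n-1)*φ) / cos ((n-1)*φ)))
            + k2 * r ^ (n-1) * ((1 / cos ((n-1)*φ))^2 + (sin ((n-1)*φ) / cos ((n-1)*φ))^2))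
         (Hnc2 n k0 k1 k2) r φ pr pφ = 0 := by
  intro r φ pr pφ hr hc
  exact ⟨pb_Jc2_Hnc2 hr hc, pb_Jc3_Hnc2 hr hc⟩
end
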